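/- Let R be a commutative Noetherian ring, m a maximal ideal of R, and f : F → M a flat cover in the category of R_m-modules. Then f, regarded as a morphism of R-modules, is a flat cover in the category of R-modules. -/
import Mathlib


universe u

variable (R : Type u) [CommRing R]

/-- A morphism `f : F → M` with `F` flat is a flat precover if every morphism from a
flat module to `M` factors through `f`. -/
def IsFlatPrecover {F M : Type u} [AddCommGroup F] [AddCommGroup M] [Module R F]
    [Module R M] (f : F →ₗ[R] M) : Prop :=
  Module.Flat R F ∧
    ∀ (F' : Type u) [AddCommGroup F'] [Module R F'], Module.Flat R F' →
      ∀ g : F' →ₗ[R] M, ∃ h : F' →ₗ[R] F, f ∘ₗ h = g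

/-- A flat precover `f : F → M` is a flat cover if every `h : F → F` with `f ∘ h = f`
is an automorphism. -/
def IsFlatCover {F M : Type u} [AddCommGroup F] [AddCommGroup M] [Module R F]
    [Module R M] (f : F →ₗ[R] M) : Prop :=
  IsFlatPrecover R f ∧ ∀ h : F →ₗ[R] F, f ∘ₗ h = f → Function.Bijective h

/-- A morphism `i : M → E` is an injective envelope if `E` is injective, `i` is
injective, and the image of `i` is an essential submodule of `E`. -/
def IsInjectiveEnvelope {M E : Type u} [AddCommGroup M] [AddCommGroup E] [Module R M]
    [Module R E] (i : M →ₗ[R] E) : Prop :=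
  Module.Injective R E ∧ Function.Injective i ∧
    ∀ N : Submodule R E, N ≠ ⊥ → N ⊓ LinearMap.range i ≠ ⊥

/-- An injective cogenerator is an injective module `E` such that `Hom(N, E) ≠ 0`
for every nonzero module `N`. -/
def IsInjectiveCogenerator (E : Type u) [AddCommGroup E] [Module R E] : Prop :=
  Module.Injective R E ∧
    ∀ (N : Type u) [AddCommGroup N] [Module R N], (∃ x : N, x ≠ 0) →
      ∃ g : N →ₗ[R] E, g ≠ 0

/-- Let `R` be a commutative Noetherian ring, `𝔪` a maximal ideal,
and `f : F → M` a flat cover in the category of `R_𝔪`-modules.  Then `f`, regarded as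
a morphism of `R`-modules, is a flat cover in the category of `R`-modules. -/
theorem flatCover_of_localization_flatCover [IsNoetherianRing R]
    (𝔪 : Ideal R) [𝔪.IsMaximal]
    {F M : Type u} [AddCommGroup F] [AddCommGroup M]
    [Module (Localization.AtPrime 𝔪) F] [Module (Localization.AtPrime 𝔪) M]
    [Module R F] [Module R M]
    [IsScalarTower R (Localization.AtPrime 𝔪) F]
    [IsScalarTower R (Localization.AtPrime 𝔪) M]
    (f : F →ₗ[Localization.AtPrime 𝔪] M)
    (hf : IsFlatCover (Localization.AtPrime 𝔪) f) :
    IsFlatCover R (f.restrictScalars R) := by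
  classical
  set A := Localization.AtPrime 𝔪 with hA
  obtain ⟨⟨hFflat, hpre⟩, hcov⟩ := hf
  have hAflat : Module.Flat R A := inferInstance
  constructor
  · constructor
    · exact Module.Flat.trans R A F
    · intro F' _ _ hF' g
      haveI := hF'
      -- base change g to an A-linear map on A ⊗[R] F'
      obtain ⟨h', hh'⟩ := hpre (TensorProduct R A F') inferInstance
        (LinearMap.liftBaseChange A g)
      refine ⟨(h'.restrictScalars R) ∘ₗ ((TensorProduct.mk R A F') 1), ?_⟩
      ext x
      have := congrArg (fun (φ : TensorProduct R A F' →ₗ[A] M) => φ ((1 : A) ⊗ₜ[R] x)) hh'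
      simpa [LinearMap.liftBaseChange_tmul] using this
  · intro h hh
    have h2 : f ∘ₗ (h.extendScalarsOfIsLocalization 𝔪.primeCompl A) = f := by
      apply LinearMap.restrictScalars_injective R
      exact hh
    have := hcov _ h2
    exact this
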